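/- Let ℓ be an odd prime. For r ∈ ZMod ℓ and s ∈ (ZMod ℓ²)ˣ, let F(r, s) be the number of nonzero vectors v : ZMod ℓ → ZMod ℓ² with s • (r • v) = v, where (r • v)(i) = v(i + r). Then: F(0, 1) = ℓ^{2ℓ} − 1; F(0, s) = ℓ^{ℓ} − 1 if s ≠ 1 and s ≡ 1 (mod ℓ); F(r, s) = ℓ² − 1 if r ≠ 0 and s ≡ 1 (mod ℓ); and F(r, s) = 0 in all remaining cases (i.e. whenever s ≢ 1 mod ℓ). -/

import Mathlib

/-!
The reduction `π : ZMod ℓ² → ZMod ℓ` has kernel `ℓ · ZMod ℓ²`, of size `ℓ` and square zero, and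
everything outside the kernel is a unit. Going `ℓ` times around the cycle generated by `r` gives
`s ^ ℓ * v i = v i`. If `π s ≠ 1` then `π (s ^ ℓ) = π s ≠ 1`, so `s ^ ℓ - 1` is a unit and `v = 0`.
If `π s = 1` then `s ^ ℓ = (1 + (s - 1)) ^ ℓ = 1 + ℓ (s - 1) = 1`; for `r ≠ 0` a solution is then
freely determined by `v 0`, while for `r = 0`, `s ≠ 1` the condition `(s - 1) v i = 0` says
exactly that every `v i` lies in the kernel.
-/

/-- `F(r, s)`: the number of nonzero vectors `v : ZMod ℓ → ZMod ℓ²` with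
`s • (r • v) = v`, i.e. `s * v (i + r) = v i` for all `i`. -/
noncomputable def Fcount (ℓ : ℕ) (r : ZMod ℓ) (s : (ZMod (ℓ ^ 2))ˣ) : ℕ :=
  Nat.card {v : ZMod ℓ → ZMod (ℓ ^ 2) // v ≠ 0 ∧
    ∀ i, (s : ZMod (ℓ ^ 2)) * v (i + r) = v i}

lemma Nat.card_subtype_ne_and {α : Type*} [Finite α] {P : α → Prop} {a : α} (ha : P a) :
    Nat.card {x // x ≠ a ∧ P x} = Nat.card {x // P x} - 1 := by
  calc Nat.card {x // x ≠ a ∧ P x} = Nat.card ↑({x | P x} \ {a}) :=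
        Nat.card_congr (Equiv.subtypeEquivRight fun x => by simp [and_comm])
    _ = Nat.card {x // P x} - 1 := by
        rw [Nat.card_coe_set_eq, Set.ncard_sdiff_singleton_of_mem (s := {x | P x}) ha,
          ← Nat.card_coe_set_eq]
        rfl

lemma Nat.card_subtype_forall_apply {ι α : Type*} [Fintype ι] (P : α → Prop) :
    Nat.card {v : ι → α // ∀ i, P (v i)} = Nat.card {x // P x} ^ Fintype.card ι := by
  rw [Nat.card_congr (Equiv.subtypePiEquivPi (p := fun _ => P)), Nat.card_pi, Finset.prod_const,
    Finset.card_univ]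

lemma one_add_pow_of_mul_self_eq_zero {R : Type*} [CommRing R] {t : R} (ht : t * t = 0)
    (n : ℕ) : (1 + t) ^ n = 1 + n * t := by
  induction n with
  | zero => simp
  | succ n ih =>
    rw [pow_succ, ih]
    push_cast
    linear_combination (n : R) * ht

lemma pow_val_add {G : Type*} [Monoid G] {n : ℕ} [NeZero n] {t : G} (ht : t ^ n = 1)
    (a b : ZMod n) : t ^ (a + b).val = t ^ a.val * t ^ b.val := by
  rw [ZMod.val_add, ← pow_eq_pow_mod _ ht, pow_add]

lemma pow_mul_apply_add_nsmul {A M : Type*} [AddMonoid A] [Monoid M] {v : A → M} {s : M} {r : A}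
    (hv : ∀ i, s * v (i + r) = v i) (k : ℕ) (i : A) : s ^ k * v (i + k • r) = v i := by
  induction k with
  | zero => simp
  | succ k ih => rw [pow_succ, succ_nsmul, ← add_assoc, mul_assoc, hv, ih]

/-- A solution is determined by `v 0` because `r` generates `ZMod p`; any value of `v 0` extends
consistently around the cycle because `s ^ p = 1`. -/
def quasiPeriodicEquiv {p : ℕ} [Fact p.Prime] {M : Type*} [Monoid M] {r : ZMod p} (hr : r ≠ 0)
    {s : Mˣ} (hs : s ^ p = 1) : {v : ZMod p → M // ∀ i, (s : M) * v (i + r) = v i} ≃ M where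
  toFun v := v.1 0
  invFun x := ⟨fun i => ↑(s⁻¹ ^ (i * r⁻¹).val) * x, fun i => by
    dsimp only
    have hs' : s⁻¹ ^ p = 1 := by rw [inv_pow, hs, inv_one]
    rw [add_mul, mul_inv_cancel₀ hr, add_comm, pow_val_add hs', ZMod.val_one, pow_one,
      ← mul_assoc, ← Units.val_mul, mul_inv_cancel_left]⟩
  left_inv v := by
    ext i
    have h := pow_mul_apply_add_nsmul v.2 (i * r⁻¹).val 0
    rw [zero_add, nsmul_eq_mul, ZMod.natCast_zmod_val, inv_mul_cancel_right₀ hr] at h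
    show ↑(s⁻¹ ^ (i * r⁻¹).val) * v.1 0 = v.1 i
    rw [← h, inv_pow, ← Units.val_pow_eq_pow_val, Units.inv_mul_cancel_left]
  right_inv x := by simp

namespace ZMod

lemma castHom_eq_zero_iff_dvd_val {m n : ℕ} [NeZero n] (h : m ∣ n) (x : ZMod n) :
    castHom h (ZMod m) x = 0 ↔ m ∣ x.val := by
  rw [castHom_apply, cast_eq_val, natCast_eq_zero_iff]

lemma card_castHom_eq_zero_mul {m n : ℕ} (h : m ∣ n) :
    Nat.card {x : ZMod n // castHom h (ZMod m) x = 0} * m = n := by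
  set f := (castHom h (ZMod m)).toAddMonoidHom
  have hrange : f.range = ⊤ := f.range_eq_top_of_surjective (castHom_surjective h)
  have := f.ker.card_mul_index
  rwa [AddSubgroup.index_ker, hrange, AddSubgroup.card_top, Nat.card_zmod, Nat.card_zmod] at this

lemma isUnit_iff_castHom_ne_zero {p k : ℕ} [Fact p.Prime] (hk : k ≠ 0) (x : ZMod (p ^ k)) :
    IsUnit x ↔ castHom (dvd_pow_self p hk) (ZMod p) x ≠ 0 := by
  rw [ne_eq, castHom_eq_zero_iff_dvd_val, ← (Fact.out : p.Prime).coprime_iff_not_dvd,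
    Nat.coprime_comm, ← Nat.coprime_pow_right_iff hk.bot_lt, ← isUnit_iff_coprime,
    natCast_zmod_val]

section Square

variable {p : ℕ}

lemma card_castHom_sq_eq_zero [NeZero p] :
    Nat.card {x : ZMod (p ^ 2) // castHom (dvd_pow_self p two_ne_zero) (ZMod p) x = 0} = p :=
  Nat.eq_of_mul_eq_mul_right (Nat.pos_of_neZero p) ((card_castHom_eq_zero_mul _).trans (sq p))

lemma mul_eq_zero_of_castHom_eq_zero [NeZero p] {x y : ZMod (p ^ 2)}
    (hx : castHom (dvd_pow_self p two_ne_zero) (ZMod p) x = 0)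
    (hy : castHom (dvd_pow_self p two_ne_zero) (ZMod p) y = 0) : x * y = 0 := by
  rw [castHom_eq_zero_iff_dvd_val] at hx hy
  rw [← natCast_zmod_val x, ← natCast_zmod_val y, ← Nat.cast_mul, natCast_eq_zero_iff]
  simpa only [← pow_two] using Nat.mul_dvd_mul hx hy

lemma pow_eq_one_of_castHom_eq_one [NeZero p] {s : ZMod (p ^ 2)}
    (hs : castHom (dvd_pow_self p two_ne_zero) (ZMod p) s = 1) : s ^ p = 1 := by
  have ht : castHom (dvd_pow_self p two_ne_zero) (ZMod p) (s - 1) = 0 := by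
    rw [map_sub, hs, map_one, sub_self]
  have hp : castHom (dvd_pow_self p two_ne_zero) (ZMod p) (p : ZMod (p ^ 2)) = 0 := by
    rw [map_natCast, natCast_self]
  rw [← add_sub_cancel 1 s, one_add_pow_of_mul_self_eq_zero (mul_eq_zero_of_castHom_eq_zero ht ht),
    mul_eq_zero_of_castHom_eq_zero hp ht, add_zero]

variable [Fact p.Prime]

lemma mul_eq_self_iff_castHom_eq_zero {s : ZMod (p ^ 2)}
    (hs : castHom (dvd_pow_self p two_ne_zero) (ZMod p) s = 1) (hs1 : s ≠ 1) (x : ZMod (p ^ 2)) :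
    s * x = x ↔ castHom (dvd_pow_self p two_ne_zero) (ZMod p) x = 0 := by
  have hs0 : castHom (dvd_pow_self p two_ne_zero) (ZMod p) (s - 1) = 0 := by
    rw [map_sub, hs, map_one, sub_self]
  rw [← sub_eq_zero, ← sub_one_mul]
  refine ⟨fun h => ?_, mul_eq_zero_of_castHom_eq_zero hs0⟩
  by_contra hx
  have hxu := (isUnit_iff_castHom_ne_zero two_ne_zero x).2 hx
  exact hs1 (sub_eq_zero.1 (hxu.mul_left_eq_zero.1 h))

lemma eq_zero_of_mul_apply_add_eq {r : ZMod p} {s : ZMod (p ^ 2)}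
    (hs : castHom (dvd_pow_self p two_ne_zero) (ZMod p) s ≠ 1) {v : ZMod p → ZMod (p ^ 2)}
    (hv : ∀ i, s * v (i + r) = v i) : v = 0 := by
  have hu : IsUnit (s ^ p - 1) := by
    rw [isUnit_iff_castHom_ne_zero two_ne_zero, map_sub, map_pow, pow_card, map_one]
    exact sub_ne_zero.2 hs
  funext i
  have h := pow_mul_apply_add_nsmul hv p i
  rw [nsmul_eq_mul, natCast_self, zero_mul, add_zero] at h
  exact hu.mul_right_eq_zero.1 (by rw [sub_one_mul, h, sub_self])

end Square

end ZMod

lemma Fcount_eq_card_sub_one (ℓ : ℕ) [NeZero ℓ] (r : ZMod ℓ) (s : (ZMod (ℓ ^ 2))ˣ) :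
    Fcount ℓ r s = Nat.card {v : ZMod ℓ → ZMod (ℓ ^ 2) //
      ∀ i, (s : ZMod (ℓ ^ 2)) * v (i + r) = v i} - 1 :=
  Nat.card_subtype_ne_and fun _ => mul_zero _

theorem fixed_vector_counts_Cl2_wr_Cl_general (ℓ : ℕ) (hℓ : ℓ.Prime) :
    Fcount ℓ 0 1 = ℓ ^ (2 * ℓ) - 1 ∧
    (∀ s : (ZMod (ℓ ^ 2))ˣ, s ≠ 1 →
      ZMod.castHom (dvd_pow_self ℓ two_ne_zero) (ZMod ℓ) (s : ZMod (ℓ ^ 2)) = 1 →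
      Fcount ℓ 0 s = ℓ ^ ℓ - 1) ∧
    (∀ (r : ZMod ℓ) (s : (ZMod (ℓ ^ 2))ˣ), r ≠ 0 →
      ZMod.castHom (dvd_pow_self ℓ two_ne_zero) (ZMod ℓ) (s : ZMod (ℓ ^ 2)) = 1 →
      Fcount ℓ r s = ℓ ^ 2 - 1) ∧
    (∀ (r : ZMod ℓ) (s : (ZMod (ℓ ^ 2))ˣ),
      ZMod.castHom (dvd_pow_self ℓ two_ne_zero) (ZMod ℓ) (s : ZMod (ℓ ^ 2)) ≠ 1 →
      Fcount ℓ r s = 0) := by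
  have := Fact.mk hℓ
  refine ⟨?_, fun s hs1 hs => ?_, fun r s hr hs => ?_, fun r s hs => ?_⟩
  · simp only [Fcount_eq_card_sub_one, Units.val_one, one_mul, add_zero, implies_true,
      Nat.card_subtype_true, Nat.card_fun, Nat.card_zmod, ← pow_mul]
  · simp only [Fcount_eq_card_sub_one, add_zero,
      ZMod.mul_eq_self_iff_castHom_eq_zero hs (Units.val_eq_one.not.2 hs1)]
    rw [Nat.card_subtype_forall_apply (ZMod.castHom (dvd_pow_self ℓ two_ne_zero) (ZMod ℓ) · = 0),
      ZMod.card_castHom_sq_eq_zero, ZMod.card]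
  · have hs' : s ^ ℓ = 1 := Units.ext (ZMod.pow_eq_one_of_castHom_eq_one hs)
    rw [Fcount_eq_card_sub_one, Nat.card_congr (quasiPeriodicEquiv hr hs'), Nat.card_zmod]
  · exact Nat.card_eq_zero.2 (.inl ⟨fun v => v.2.1 (ZMod.eq_zero_of_mul_apply_add_eq hs v.2.2)⟩)

theorem fixed_vector_counts_Cl2_wr_Cl (ℓ : ℕ) (hℓ : ℓ.Prime) (hodd : Odd ℓ) :
    Fcount ℓ 0 1 = ℓ ^ (2 * ℓ) - 1 ∧
    (∀ s : (ZMod (ℓ ^ 2))ˣ, s ≠ 1 →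
      ZMod.castHom (dvd_pow_self ℓ two_ne_zero) (ZMod ℓ) (s : ZMod (ℓ ^ 2)) = 1 →
      Fcount ℓ 0 s = ℓ ^ ℓ - 1) ∧
    (∀ (r : ZMod ℓ) (s : (ZMod (ℓ ^ 2))ˣ), r ≠ 0 →
      ZMod.castHom (dvd_pow_self ℓ two_ne_zero) (ZMod ℓ) (s : ZMod (ℓ ^ 2)) = 1 →
      Fcount ℓ r s = ℓ ^ 2 - 1) ∧
    (∀ (r : ZMod ℓ) (s : (ZMod (ℓ ^ 2))ˣ),
      ZMod.castHom (dvd_pow_self ℓ two_ne_zero) (ZMod ℓ) (s : ZMod (ℓ ^ 2)) ≠ 1 →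
      Fcount ℓ r s = 0) :=
  fixed_vector_counts_Cl2_wr_Cl_general ℓ hℓ
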